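/- arXiv:1302.6434 — 6 statements merged into one kernel-verified Lean document; each statement's English description precedes it below -/
import Mathlib

section
/- Let y ∈ ℝⁿ, G an n×m real matrix, σ > 0 and γ > 0. Define F(θ) = exp(-‖y - Gθ‖²/(2σ²)) · ∏_{i=1}^m ∫₀^∞ (2πλ)^{-1/2} exp(-θᵢ²/(2λ)) γ exp(-γλ) dλ for θ ∈ ℝ^m, and the Lasso objective L(θ) = ‖y - Gθ‖²/(2σ²) + √(2γ) · Σ_{i=1}^m |θᵢ|. Then for all θ, θ' ∈ ℝ^m one has F(θ) ≥ F(θ') if and only if L(θ) ≤ L(θ'). In particular the maximizers of the marginal density F coincide with the Lasso minimizers with regularization parameter γ_L = √(2γ). -/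
/-!
Integrating out `λ` turns each factor of `F` into a Laplace density: after `λ = u²` the exponent
is `-(√γ u - |a| / (√2 u))² - √(2γ) |a|`, and the Cauchy–Schlömilch substitution
`w = √γ u - |a| / (√2 u)` (combined with its symmetry under `u ↦ |a| / (√(2γ) u)`) gives
`∫₀^∞ (2πλ)^{-1/2} e^{-a²/(2λ)} γ e^{-γλ} dλ = √(γ/2) e^{-√(2γ) |a|}`.
Hence `F θ = √(γ/2)^m · exp (-L θ)`, a strictly decreasing function of `L θ`.
-/

open MeasureTheory Matrix

open Real Set

theorem integral_Ioi_comp_div_mul_div_sq {c : ℝ} (hc : 0 < c) (g : ℝ → ℝ) :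
    ∫ u in Ioi (0 : ℝ), g (c / u) * (c / u ^ 2) = ∫ u in Ioi (0 : ℝ), g u := by
  have hderiv : ∀ x ∈ Ioi (0 : ℝ), HasDerivWithinAt (fun u => c / u) (-(c / x ^ 2)) (Ioi 0) x :=
    fun x hx => by
      have h := (hasDerivAt_inv (ne_of_gt hx)).const_mul c
      simp only [mul_neg, ← div_eq_mul_inv] at h
      exact h.hasDerivWithinAt
  have hinj : InjOn (fun u : ℝ => c / u) (Ioi 0) := fun x _ z _ h =>
    inv_injective (by simpa [div_eq_mul_inv, hc.ne'] using h)
  have himage : (fun u : ℝ => c / u) '' Ioi 0 = Ioi 0 := by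
    refine Subset.antisymm (image_subset_iff.2 fun u hu => div_pos hc hu) fun w hw => ?_
    exact ⟨c / w, div_pos hc hw, div_div_cancel₀ hc.ne'⟩
  conv_rhs => rw [← himage, integral_image_eq_integral_abs_deriv_smul measurableSet_Ioi hderiv hinj]
  refine setIntegral_congr_fun measurableSet_Ioi fun u hu => ?_
  rw [smul_eq_mul, abs_neg, abs_of_pos (div_pos hc (pow_pos hu 2)), mul_comm]

section MulSubDiv

variable {α β : ℝ}

theorem hasDerivAt_mul_sub_div {x : ℝ} (hx : x ≠ 0) :
    HasDerivAt (fun u => α * u - β / u) (α + β / x ^ 2) x := by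
  have h := ((hasDerivAt_id' x).const_mul α).fun_sub ((hasDerivAt_inv hx).const_mul β)
  simp only [← div_eq_mul_inv] at h
  exact h.congr_deriv (by ring)

theorem strictMonoOn_mul_sub_div (hα : 0 < α) (hβ : 0 ≤ β) :
    StrictMonoOn (fun u => α * u - β / u) (Ioi 0) := fun x hx z _ hxz => by
  have : β / z ≤ β / x := div_le_div_of_nonneg_left hβ hx hxz.le
  have : α * x < α * z := mul_lt_mul_of_pos_left hxz hα
  simp only; linarith

theorem image_mul_sub_div_Ioi (hα : 0 < α) (hβ : 0 < β) :
    (fun u => α * u - β / u) '' Ioi 0 = univ := by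
  refine eq_univ_of_forall fun w => ?_
  -- the positive root of `α u² - w u - β = 0`
  set s := √(w ^ 2 + 4 * α * β)
  have hs : s ^ 2 = w ^ 2 + 4 * α * β := sq_sqrt (by positivity)
  have hws : 0 < w + s := by
    have : |w| < s := by
      rw [← sqrt_sq_eq_abs]; exact sqrt_lt_sqrt (sq_nonneg w) (by nlinarith)
    linarith [neg_abs_le w]
  refine ⟨(w + s) / (2 * α), div_pos hws (by positivity), ?_⟩
  field_simp
  nlinarith [hs]

end MulSubDiv

theorem integral_exp_neg_sq_mul_sub_div {α β : ℝ} (hα : 0 < α) (hβ : 0 ≤ β) :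
    ∫ u in Ioi (0 : ℝ), exp (-(α * u - β / u) ^ 2) = √π / (2 * α) := by
  rcases hβ.eq_or_lt with rfl | hβ'
  · have h : ∀ u : ℝ, exp (-(α * u - 0 / u) ^ 2) = exp (-(α ^ 2) * u ^ 2) := fun u => by
      rw [zero_div, sub_zero, mul_pow, neg_mul]
    simp_rw [h, integral_gaussian_Ioi, sqrt_div pi_nonneg, sqrt_sq hα.le]
    ring
  set f : ℝ → ℝ := fun u => α * u - β / u
  set e : ℝ → ℝ := fun u => exp (-(f u) ^ 2)
  have hderiv : ∀ x ∈ Ioi (0 : ℝ), HasDerivWithinAt f (α + β / x ^ 2) (Ioi 0) x :=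
    fun x hx => (hasDerivAt_mul_sub_div (ne_of_gt hx)).hasDerivWithinAt
  have hinj : InjOn f (Ioi 0) := (strictMonoOn_mul_sub_div hα hβ).injOn
  have habs : ∀ u ∈ Ioi (0 : ℝ), |α + β / u ^ 2| = α + β / u ^ 2 := fun u hu =>
    abs_of_pos (by have : (0 : ℝ) < u := hu; positivity)
  have hgauss : ∫ w : ℝ, exp (-w ^ 2) = √π := by simpa using integral_gaussian 1
  have hgauss_int : Integrable fun w : ℝ => exp (-w ^ 2) := by
    simpa using integrable_exp_neg_mul_sq one_pos
  have hcongr : EqOn (fun u => |α + β / u ^ 2| • e u) (fun u => (α + β / u ^ 2) * e u) (Ioi 0) :=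
    fun u hu => by simp only [smul_eq_mul, habs u hu]
  have hsum_int : IntegrableOn (fun u => (α + β / u ^ 2) * e u) (Ioi 0) := by
    refine (integrableOn_congr_fun hcongr measurableSet_Ioi).1 ?_
    refine (integrableOn_image_iff_integrableOn_abs_deriv_smul measurableSet_Ioi hderiv hinj
      (fun w => exp (-w ^ 2))).1 ?_
    rw [image_mul_sub_div_Ioi hα hβ']
    exact hgauss_int.integrableOn
  have hsum : ∫ u in Ioi (0 : ℝ), (α + β / u ^ 2) * e u = √π := by
    have h := integral_image_eq_integral_abs_deriv_smul measurableSet_Ioi hderiv hinj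
      (fun w => exp (-w ^ 2))
    rw [image_mul_sub_div_Ioi hα hβ', Measure.restrict_univ, hgauss] at h
    rw [← setIntegral_congr_fun measurableSet_Ioi hcongr]
    exact h.symm
  have hα_int : IntegrableOn (fun u => α * e u) (Ioi 0) := by
    refine hsum_int.mono' (Measurable.aestronglyMeasurable (by fun_prop)) ?_
    filter_upwards [self_mem_ae_restrict measurableSet_Ioi] with u hu
    have : (0 : ℝ) < u := hu
    rw [norm_of_nonneg (by positivity)]
    gcongr
    exact le_add_of_nonneg_right (by positivity)
  -- the substitution `u ↦ (β / α) / u` leaves `e` invariant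
  have hsym : ∫ u in Ioi (0 : ℝ), β / u ^ 2 * e u = ∫ u in Ioi (0 : ℝ), α * e u := by
    rw [← integral_Ioi_comp_div_mul_div_sq (div_pos hβ' hα) fun u => α * e u]
    refine setIntegral_congr_fun measurableSet_Ioi fun u hu => ?_
    have : (0 : ℝ) < u := hu
    have hfu : f (β / α / u) = -f u := by simp only [f]; field_simp; ring
    simp only [e, hfu, neg_sq]
    field_simp
  have hsplit : ∫ u in Ioi (0 : ℝ), β / u ^ 2 * e u
      = (∫ u in Ioi (0 : ℝ), (α + β / u ^ 2) * e u) - ∫ u in Ioi (0 : ℝ), α * e u := by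
    rw [← integral_sub hsum_int hα_int]
    congr 1 with u
    ring
  rw [hsplit, hsum, integral_const_mul] at hsym
  rw [eq_div_iff (by positivity)]
  linarith

theorem integral_rpow_neg_half_mul_exp_neg_div_add_mul {a b : ℝ} (ha : 0 ≤ a) (hb : 0 < b) :
    ∫ l in Ioi (0 : ℝ), l ^ (-(1 : ℝ) / 2) * exp (-(a / l + b * l))
      = √(π / b) * exp (-(2 * √(a * b))) := by
  have hsb : 0 < √b := sqrt_pos.2 hb
  -- substitute `l = u²`
  rw [← integral_comp_rpow_Ioi_of_pos two_pos]
  have h : ∀ u ∈ Ioi (0 : ℝ),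
      ((2 : ℝ) * u ^ ((2 : ℝ) - 1)) • ((u ^ (2 : ℝ)) ^ (-(1 : ℝ) / 2) *
        exp (-(a / u ^ (2 : ℝ) + b * u ^ (2 : ℝ))))
      = 2 * exp (-(2 * √(a * b))) * exp (-(√b * u - √a / u) ^ 2) := by
    intro u (hu : 0 < u)
    have hsqrt : (u ^ 2) ^ (-(1 : ℝ) / 2) = u⁻¹ := by
      rw [← rpow_natCast, ← rpow_mul hu.le]
      norm_num [rpow_neg_one]
    have hexp : -(a / u ^ 2 + b * u ^ 2) = -(2 * √(a * b)) + -(√b * u - √a / u) ^ 2 := by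
      rw [sqrt_mul ha]
      field_simp
      linear_combination sq_sqrt ha + u ^ 4 * sq_sqrt hb.le
    rw [rpow_two, hsqrt, hexp, exp_add, smul_eq_mul]
    norm_num
    field_simp
  rw [setIntegral_congr_fun measurableSet_Ioi h, integral_const_mul,
    integral_exp_neg_sq_mul_sub_div hsb (sqrt_nonneg a), sqrt_div' π hb.le]
  field_simp

theorem integral_gaussian_mul_exponential {γ : ℝ} (hγ : 0 < γ) (a : ℝ) :
    ∫ l in Ioi (0 : ℝ), (2 * π * l) ^ (-(1 : ℝ) / 2) * exp (-a ^ 2 / (2 * l)) *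
        (γ * exp (-γ * l))
      = √(γ / 2) * exp (-√(2 * γ) * |a|) := by
  have h : ∀ l ∈ Ioi (0 : ℝ),
      (2 * π * l) ^ (-(1 : ℝ) / 2) * exp (-a ^ 2 / (2 * l)) * (γ * exp (-γ * l))
      = (2 * π) ^ (-(1 : ℝ) / 2) * γ * (l ^ (-(1 : ℝ) / 2) * exp (-(a ^ 2 / 2 / l + γ * l))) := by
    intro l (hl : 0 < l)
    rw [mul_rpow (by positivity) hl.le, neg_add, exp_add]
    ring_nf
  have hroot : 2 * √(a ^ 2 / 2 * γ) = √(2 * γ) * |a| := by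
    have hsq : a ^ 2 / 2 * γ = (√(2 * γ) * |a| / 2) ^ 2 := by
      rw [div_pow, mul_pow, sq_sqrt (by positivity), sq_abs]
      ring
    rw [hsq, sqrt_sq (by positivity)]
    ring
  have hinvsqrt : (2 * π) ^ (-(1 : ℝ) / 2) = (√(2 * π))⁻¹ := by
    rw [neg_div, rpow_neg (by positivity), sqrt_eq_rpow]
  rw [setIntegral_congr_fun measurableSet_Ioi h, integral_const_mul,
    integral_rpow_neg_half_mul_exp_neg_div_add_mul (by positivity) hγ, hroot, hinvsqrt,
    sqrt_div' π hγ.le, sqrt_div' γ zero_le_two, sqrt_mul zero_le_two, neg_mul]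
  have : 0 < √π := sqrt_pos.2 pi_pos
  have : 0 < √γ := sqrt_pos.2 hγ
  field_simp
  rw [sq_sqrt hγ.le]

theorem stmt_1_general (n m : ℕ) (y : Fin n → ℝ) (G : Matrix (Fin n) (Fin m) ℝ) (σ γ : ℝ)
    (hγ : 0 < γ)
    (F L : (Fin m → ℝ) → ℝ)
    (hF : ∀ θ, F θ =
      Real.exp (-(∑ i, (y i - G.mulVec θ i) ^ 2) / (2 * σ ^ 2)) *
        ∏ i, ∫ l in Set.Ioi (0 : ℝ),
          (2 * Real.pi * l) ^ (-(1 : ℝ) / 2) * Real.exp (-(θ i) ^ 2 / (2 * l)) *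
            (γ * Real.exp (-γ * l)))
    (hL : ∀ θ, L θ =
      (∑ i, (y i - G.mulVec θ i) ^ 2) / (2 * σ ^ 2) + Real.sqrt (2 * γ) * ∑ i, |θ i|) :
    (∀ θ θ' : Fin m → ℝ, F θ ≥ F θ' ↔ L θ ≤ L θ') ∧
      (∀ θ : Fin m → ℝ, (∀ θ', F θ' ≤ F θ) ↔ (∀ θ', L θ ≤ L θ')) := by
  have hFL : ∀ θ, F θ = √(γ / 2) ^ m * exp (-L θ) := fun θ => by
    simp_rw [hF, hL, integral_gaussian_mul_exponential hγ, Finset.prod_mul_distrib,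
      Finset.prod_const, Finset.card_univ, Fintype.card_fin, ← exp_sum]
    rw [mul_left_comm, ← exp_add, ← Finset.mul_sum]
    ring_nf
  have hiff : ∀ θ θ' : Fin m → ℝ, F θ ≥ F θ' ↔ L θ ≤ L θ' := fun θ θ' => by
    rw [hFL, hFL, ge_iff_le, mul_le_mul_iff_right₀ (by positivity), exp_le_exp, neg_le_neg_iff]
  exact ⟨hiff, fun θ => forall_congr' fun θ' => hiff θ θ'⟩

/-- The marginal density `F` of the hierarchical Bayesian model and the Lasso objective `L`
are related by: `F θ ≥ F θ'` iff `L θ ≤ L θ'`; in particular the maximizers of `F`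
coincide with the Lasso minimizers with regularization parameter `√(2γ)`. -/
theorem stmt_1 (n m : ℕ) (y : Fin n → ℝ) (G : Matrix (Fin n) (Fin m) ℝ) (σ γ : ℝ)
    (hσ : 0 < σ) (hγ : 0 < γ)
    (F L : (Fin m → ℝ) → ℝ)
    (hF : ∀ θ, F θ =
      Real.exp (-(∑ i, (y i - G.mulVec θ i) ^ 2) / (2 * σ ^ 2)) *
        ∏ i, ∫ l in Set.Ioi (0 : ℝ),
          (2 * Real.pi * l) ^ (-(1 : ℝ) / 2) * Real.exp (-(θ i) ^ 2 / (2 * l)) *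
            (γ * Real.exp (-γ * l)))
    (hL : ∀ θ, L θ =
      (∑ i, (y i - G.mulVec θ i) ^ 2) / (2 * σ ^ 2) + Real.sqrt (2 * γ) * ∑ i, |θ i|) :
    (∀ θ θ' : Fin m → ℝ, F θ ≥ F θ' ↔ L θ ≤ L θ') ∧
      (∀ θ : Fin m → ℝ, (∀ θ', F θ' ≤ F θ) ↔ (∀ θ', L θ ≤ L θ')) :=
  stmt_1_general n m y G σ γ hγ F L hF hL
end

section
/- Let k ≥ 2 be an integer and γ > 0, and define g : ℝ^k → [0,∞] by g(θ) = ∫₀^∞ (2πλ)^{-k/2} exp(-‖θ‖²/(2λ)) γ exp(-γλ) dλ. Then g(θ) < ∞ for every θ ≠ 0, and g(θ) → ∞ as θ → 0, i.e., for every M > 0 there is δ > 0 such that g(θ) > M whenever 0 < ‖θ‖ < δ. (In contrast, the Group Lasso prior density θ ↦ exp(-γ_GL ‖θ‖) remains bounded as θ → 0.) -/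
open MeasureTheory

lemma pow_div_factorial_le_exp' {x : ℝ} (hx : 0 ≤ x) (k : ℕ) :
    x ^ k / (Nat.factorial k : ℝ) ≤ Real.exp x :=
  calc x ^ k / (Nat.factorial k : ℝ)
      ≤ ∑ i ∈ Finset.range (k + 1), x ^ i / (Nat.factorial i : ℝ) :=
        Finset.single_le_sum (f := fun i => x ^ i / (Nat.factorial i : ℝ))
          (fun i _ => by positivity) (Finset.self_mem_range_succ k)
    _ ≤ Real.exp x := Real.sum_le_exp_of_nonneg hx _

/-- For block size `k ≥ 2`, the marginal prior density `g` (a multivariate Laplace density)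
is finite away from the origin and blows up at the origin. -/
theorem stmt_10 (k : ℕ) (hk : 2 ≤ k) (γ : ℝ) (hγ : 0 < γ)
    (g : EuclideanSpace ℝ (Fin k) → ENNReal)
    (hg : ∀ θ, g θ = ∫⁻ l in Set.Ioi (0 : ℝ),
      ENNReal.ofReal ((2 * Real.pi * l) ^ (-(k : ℝ) / 2) * Real.exp (-‖θ‖ ^ 2 / (2 * l)) *
        (γ * Real.exp (-γ * l)))) :
    (∀ θ, θ ≠ 0 → g θ < ⊤) ∧
      (∀ M : ℝ, 0 < M → ∃ δ : ℝ, 0 < δ ∧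
        ∀ θ : EuclideanSpace ℝ (Fin k), 0 < ‖θ‖ → ‖θ‖ < δ → ENNReal.ofReal M < g θ) := by
  have hπ : (0 : ℝ) < 2 * Real.pi := by positivity
  constructor
  · -- Finiteness away from the origin
    intro θ hθ
    set r : ℝ := ‖θ‖ with hrdef
    have hr : 0 < r := norm_pos_iff.mpr hθ
    set B : ℝ := max 1 ((Nat.factorial k : ℝ) * (2 / r ^ 2) ^ k) with hBdef
    have hB1 : (1 : ℝ) ≤ B := le_max_left _ _
    have hB0 : 0 ≤ B := le_trans zero_le_one hB1
    set C : ℝ := (2 * Real.pi) ^ (-(k : ℝ) / 2) * B * γ with hCdef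
    -- pointwise bound
    have key : ∀ l ∈ Set.Ioi (0 : ℝ),
        (2 * Real.pi * l) ^ (-(k : ℝ) / 2) * Real.exp (-r ^ 2 / (2 * l)) *
          (γ * Real.exp (-γ * l)) ≤ C * Real.exp (-γ * l) := by
      intro l hl
      rw [Set.mem_Ioi] at hl
      have hsplit : (2 * Real.pi * l) ^ (-(k : ℝ) / 2)
          = (2 * Real.pi) ^ (-(k : ℝ) / 2) * l ^ (-(k : ℝ) / 2) :=
        Real.mul_rpow hπ.le hl.le
      have hexp2 : l ^ (-(k : ℝ) / 2) * Real.exp (-r ^ 2 / (2 * l)) ≤ B := by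
        rcases le_or_gt 1 l with h1 | h1
        · have e1 : l ^ (-(k : ℝ) / 2) ≤ 1 :=
            Real.rpow_le_one_of_one_le_of_nonpos h1
              (by have : (0:ℝ) ≤ (k:ℝ) := Nat.cast_nonneg k; linarith)
          have e2 : Real.exp (-r ^ 2 / (2 * l)) ≤ 1 := by
            rw [Real.exp_le_one_iff]
            have : 0 ≤ r ^ 2 / (2 * l) := by positivity
            linarith [this, neg_div (2 * l) (r ^ 2)]
          calc l ^ (-(k : ℝ) / 2) * Real.exp (-r ^ 2 / (2 * l)) ≤ 1 * 1 := by
                exact mul_le_mul e1 e2 (Real.exp_pos _).le zero_le_one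
            _ ≤ B := by simpa using hB1
        · -- l < 1
          set a : ℝ := r ^ 2 / (2 * l) with hadef
          have ha : 0 < a := by positivity
          have hak : 0 < a ^ k / (Nat.factorial k : ℝ) := by positivity
          have hexple : Real.exp (-a) ≤ (Nat.factorial k : ℝ) / a ^ k := by
            have h := one_div_le_one_div_of_le hak (pow_div_factorial_le_exp' ha.le k)
            rw [one_div_div] at h
            rw [Real.exp_neg, ← one_div]
            exact h
          have hfac : (Nat.factorial k : ℝ) / a ^ k
              = (Nat.factorial k : ℝ) * (2 / r ^ 2) ^ k * l ^ k := by
            rw [hadef]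
            rw [div_pow, div_pow]
            field_simp
            ring
          have hrpow : l ^ (-(k : ℝ) / 2) * l ^ k = l ^ ((k : ℝ) / 2) := by
            rw [← Real.rpow_natCast l k, ← Real.rpow_add hl]
            ring_nf
          have hl1 : l ^ ((k : ℝ) / 2) ≤ 1 :=
            Real.rpow_le_one hl.le h1.le (by positivity)
          have hexp' : -r ^ 2 / (2 * l) = -a := by rw [hadef]; ring
          calc l ^ (-(k : ℝ) / 2) * Real.exp (-r ^ 2 / (2 * l))
              ≤ l ^ (-(k : ℝ) / 2) * ((Nat.factorial k : ℝ) / a ^ k) := by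
                rw [hexp']
                exact mul_le_mul_of_nonneg_left hexple (Real.rpow_nonneg hl.le _)
            _ = (Nat.factorial k : ℝ) * (2 / r ^ 2) ^ k * (l ^ (-(k : ℝ) / 2) * l ^ k) := by
                rw [hfac]; ring
            _ ≤ (Nat.factorial k : ℝ) * (2 / r ^ 2) ^ k * 1 := by
                rw [hrpow]
                exact mul_le_mul_of_nonneg_left hl1 (by positivity)
            _ ≤ B := by rw [mul_one]; exact le_max_right _ _
      calc (2 * Real.pi * l) ^ (-(k : ℝ) / 2) * Real.exp (-r ^ 2 / (2 * l)) *
            (γ * Real.exp (-γ * l))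
          = (2 * Real.pi) ^ (-(k : ℝ) / 2) *
              (l ^ (-(k : ℝ) / 2) * Real.exp (-r ^ 2 / (2 * l))) *
              γ * Real.exp (-γ * l) := by rw [hsplit]; ring
        _ ≤ (2 * Real.pi) ^ (-(k : ℝ) / 2) * B * γ * Real.exp (-γ * l) := by
            have := mul_le_mul_of_nonneg_left hexp2
              (Real.rpow_nonneg hπ.le (-(k : ℝ) / 2))
            exact mul_le_mul_of_nonneg_right
              (mul_le_mul_of_nonneg_right this hγ.le) (Real.exp_pos _).le
        _ = C * Real.exp (-γ * l) := by rw [hCdef]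
    have hint : IntegrableOn (fun l : ℝ => C * Real.exp (-γ * l)) (Set.Ioi 0) :=
      (exp_neg_integrableOn_Ioi 0 hγ).const_mul C
    have hfin : (∫⁻ l in Set.Ioi (0 : ℝ), ENNReal.ofReal (C * Real.exp (-γ * l))) < ⊤ := by
      have h0 : (0 : ℝ → ℝ) ≤ᵐ[volume.restrict (Set.Ioi (0:ℝ))]
          fun l => C * Real.exp (-γ * l) := by
        refine Filter.Eventually.of_forall fun x => ?_
        have hC : 0 ≤ C := by
          rw [hCdef]; positivity
        positivity
      exact (hasFiniteIntegral_iff_ofReal h0).1 hint.hasFiniteIntegral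
    rw [hg θ]
    refine lt_of_le_of_lt ?_ hfin
    refine lintegral_mono_ae ?_
    filter_upwards [ae_restrict_mem measurableSet_Ioi] with l hl
    exact ENNReal.ofReal_le_ofReal (key l hl)
  · -- Blow-up at the origin
    intro M hM
    set c₀ : ℝ := (2 * Real.pi) ^ (-(k : ℝ) / 2) * Real.exp (-(1/2)) *
      (γ * Real.exp (-γ)) with hc₀def
    have hc₀ : 0 < c₀ := by
      rw [hc₀def]
      have : 0 < (2 * Real.pi) ^ (-(k : ℝ) / 2) := Real.rpow_pos_of_pos hπ _
      positivity
    refine ⟨min 1 (Real.exp (-(M + 1) / (2 * c₀))), lt_min one_pos (Real.exp_pos _), ?_⟩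
    intro θ hr hrδ
    set r : ℝ := ‖θ‖ with hrdef
    have hr1 : r < 1 := lt_of_lt_of_le hrδ (min_le_left _ _)
    have hrlog : Real.log r < -(M + 1) / (2 * c₀) := by
      have h := Real.log_lt_log hr (lt_of_lt_of_le hrδ (min_le_right _ _))
      rwa [Real.log_exp] at h
    have hr2 : (0:ℝ) < r ^ 2 := by positivity
    have hr21 : r ^ 2 < 1 := by nlinarith
    -- the value of the comparison integral
    have hval : ∫ l in Set.Ioc (r ^ 2) 1, c₀ * l⁻¹ = c₀ * (-(2 * Real.log r)) := by
      rw [← intervalIntegral.integral_of_le hr21.le, intervalIntegral.integral_const_mul,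
        integral_inv_of_pos hr2 one_pos]
      rw [Real.log_div one_ne_zero (ne_of_gt hr2), Real.log_one, Real.log_pow]
      push_cast
      ring
    have hMlt : M < c₀ * (-(2 * Real.log r)) := by
      have h2c : 0 < 2 * c₀ := by positivity
      have h := (lt_div_iff₀ h2c).1 hrlog
      nlinarith [hc₀]
    have hIoc_sub : Set.Ioc (r ^ 2) 1 ⊆ Set.Ioi (0 : ℝ) := fun x hx =>
      lt_trans hr2 hx.1
    -- integrability of comparison function
    have hii : IntervalIntegrable (fun l : ℝ => c₀ * l⁻¹) volume (r ^ 2) 1 := by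
      refine IntervalIntegrable.const_mul ?_ c₀
      refine intervalIntegral.intervalIntegrable_inv (fun x hx => ?_) (by fun_prop)
      rcases Set.mem_uIcc.1 hx with h | h
      · exact ne_of_gt (lt_of_lt_of_le hr2 h.1)
      · exact ne_of_gt (lt_of_lt_of_le one_pos h.1)
    have hinteg : IntegrableOn (fun l : ℝ => c₀ * l⁻¹) (Set.Ioc (r ^ 2) 1) :=
      (intervalIntegrable_iff_integrableOn_Ioc_of_le hr21.le).1 hii
    have hnn : (0 : ℝ → ℝ) ≤ᵐ[volume.restrict (Set.Ioc (r ^ 2) 1)] fun l => c₀ * l⁻¹ := by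
      filter_upwards [ae_restrict_mem measurableSet_Ioc] with x hx
      have hx0 : 0 < x := lt_trans hr2 hx.1
      positivity
    have heq : ENNReal.ofReal (c₀ * (-(2 * Real.log r)))
        = ∫⁻ l in Set.Ioc (r ^ 2) 1, ENNReal.ofReal (c₀ * l⁻¹) := by
      rw [← hval]
      exact ofReal_integral_eq_lintegral_ofReal hinteg hnn
    -- pointwise lower bound on Ioc (r^2) 1
    have hpt : ∀ l ∈ Set.Ioc (r ^ 2) 1, c₀ * l⁻¹ ≤
        (2 * Real.pi * l) ^ (-(k : ℝ) / 2) * Real.exp (-r ^ 2 / (2 * l)) *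
          (γ * Real.exp (-γ * l)) := by
      intro l hl
      have hl0 : 0 < l := lt_trans hr2 hl.1
      have h1 : (2 * Real.pi) ^ (-(k : ℝ) / 2) * l⁻¹ ≤ (2 * Real.pi * l) ^ (-(k : ℝ) / 2) := by
        rw [Real.mul_rpow hπ.le hl0.le]
        refine mul_le_mul_of_nonneg_left ?_ (Real.rpow_nonneg hπ.le _)
        have : l ^ (-1 : ℝ) ≤ l ^ (-(k : ℝ) / 2) := by
          apply Real.rpow_le_rpow_of_exponent_ge hl0 hl.2
          have : (2:ℝ) ≤ (k:ℝ) := by exact_mod_cast hk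
          linarith
        rwa [Real.rpow_neg_one] at this
      have h2 : Real.exp (-(1/2)) ≤ Real.exp (-r ^ 2 / (2 * l)) := by
        apply Real.exp_le_exp.mpr
        rw [neg_div, neg_le_neg_iff, div_le_div_iff₀ (by positivity) (by positivity)]
        nlinarith [hl.1]
      have h3 : γ * Real.exp (-γ) ≤ γ * Real.exp (-γ * l) := by
        refine mul_le_mul_of_nonneg_left (Real.exp_le_exp.mpr ?_) hγ.le
        nlinarith [hl.2, hγ]
      calc c₀ * l⁻¹ = ((2 * Real.pi) ^ (-(k : ℝ) / 2) * l⁻¹) * Real.exp (-(1/2)) *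
            (γ * Real.exp (-γ)) := by rw [hc₀def]; ring
        _ ≤ (2 * Real.pi * l) ^ (-(k : ℝ) / 2) * Real.exp (-r ^ 2 / (2 * l)) *
            (γ * Real.exp (-γ * l)) := by
          have hnn1 : 0 ≤ (2 * Real.pi) ^ (-(k : ℝ) / 2) * l⁻¹ := by positivity
          refine mul_le_mul (mul_le_mul h1 h2 (Real.exp_pos _).le
            (Real.rpow_nonneg (by positivity) _)) h3 (by positivity) (by positivity)
    have hlow : ENNReal.ofReal (c₀ * (-(2 * Real.log r))) ≤ g θ := by
      rw [hg θ, heq]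
      refine le_trans (lintegral_mono_ae ?_) (lintegral_mono_set hIoc_sub)
      filter_upwards [ae_restrict_mem measurableSet_Ioc] with l hl
      exact ENNReal.ofReal_le_ofReal (hpt l hl)
    refine lt_of_lt_of_le ?_ hlow
    exact (ENNReal.ofReal_lt_ofReal_iff (lt_trans hM hMlt)).2 hMlt
end

section
/- Let n, σ², k > 0 and t ≥ 0, and define f : [0,∞) → ℝ by f(λ) = σ² (n k λ² + σ² t) / (nλ + σ²)². Then f attains its global minimum over [0,∞) at λ = t/k, i.e., f(t/k) ≤ f(λ) for all λ ≥ 0. -/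
/-! Writing `s = t / k`, the numerator at the optimum factors as `k s (n s + σ²)`, and
`f(λ) - f(s) = σ⁴ n k (λ - s)² / ((nλ + σ²)² (n s + σ²))`, which is a square times a
nonnegative factor. -/

lemma mse_sub_mse_opt (n σ2 k s l : ℝ) (hl : n * l + σ2 ≠ 0) (hs : n * s + σ2 ≠ 0) :
    σ2 * (n * k * l ^ 2 + σ2 * (k * s)) / (n * l + σ2) ^ 2
      - σ2 * (n * k * s ^ 2 + σ2 * (k * s)) / (n * s + σ2) ^ 2
      = σ2 ^ 2 * n * k * (l - s) ^ 2 / ((n * l + σ2) ^ 2 * (n * s + σ2)) := by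
  field_simp
  ring

lemma mse_opt_le_mse {n σ2 k s : ℝ} (hn : 0 ≤ n) (hσ2 : 0 < σ2) (hk : 0 ≤ k) (hs : 0 ≤ s)
    {l : ℝ} (hl : 0 ≤ l) :
    σ2 * (n * k * s ^ 2 + σ2 * (k * s)) / (n * s + σ2) ^ 2
      ≤ σ2 * (n * k * l ^ 2 + σ2 * (k * s)) / (n * l + σ2) ^ 2 := by
  have hl' : 0 < n * l + σ2 := by positivity
  have hs' : 0 < n * s + σ2 := by positivity
  rw [← sub_nonneg, mse_sub_mse_opt n σ2 k s l hl'.ne' hs'.ne']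
  positivity

/-- The per-block MSE `f(λ) = σ²(nkλ² + σ²t)/(nλ+σ²)²` attains its global minimum
over `[0,∞)` at `λ = t/k`. -/
theorem stmt_12 (n σ2 k t : ℝ) (hn : 0 < n) (hσ2 : 0 < σ2) (hk : 0 < k) (ht : 0 ≤ t)
    (f : ℝ → ℝ) (hf : ∀ l, f l = σ2 * (n * k * l ^ 2 + σ2 * t) / (n * l + σ2) ^ 2) :
    ∀ l : ℝ, 0 ≤ l → f (t / k) ≤ f l := by
  intro l hl
  set s := t / k
  have ht_eq : t = k * s := (mul_div_cancel₀ t hk.ne').symm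
  rw [hf, hf, ht_eq]
  exact mse_opt_le_mse hn.le hσ2 hk.le (div_nonneg ht hk.le) hl
end

section
/- Let k, n, σ², γ > 0 and t ≥ 0, and define φ : [0,∞) → ℝ by φ(λ) = (k/2)·log(nλ + σ²) + n t / (2(nλ + σ²)) + γλ. Then φ has a unique global minimizer over [0,∞), given by λ̂(γ) = max( 0 , (1/(4γ))·[ √(k² + 8γt) − (k + 4σ²γ/n) ] ); moreover λ̂(γ) = 0 if and only if t ≤ (σ²/n)(k + 2γσ²/n). -/
/-!
Substituting `u = nλ + σ²` turns `φ` into `F(u) = (k/2) log u + nt/(2u) + (γ/n) u` up to the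
constant `γσ²/n`, to be minimized over `u ≥ σ²`. Its derivative is `q(u)/(2nu²)` with
`q(u) = 2γu² + knu − n²t = (u − u*)(2γ(u + u*) + kn)`, where `u* = n(√(k² + 8γt) − k)/(4γ) ≥ 0`
is the nonnegative root of `q`. Hence `F` strictly decreases up to `u*` and strictly increases
after it, so its unique minimizer on `[σ², ∞)` is `max σ² u*`, which is `n λ̂(γ) + σ²`. Finally
`λ̂(γ) = 0` iff `u* ≤ σ²` iff `q(σ²) ≥ 0`, which is the stated bound on `t`.
-/

open Real Set

theorem lt_apply_of_hasDerivAt_neg_of_pos {f f' : ℝ → ℝ} {a c : ℝ} (hac : a ≤ c)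
    (hf : ∀ x, a ≤ x → HasDerivAt f (f' x) x)
    (hneg : ∀ x, a < x → x < c → f' x < 0) (hpos : ∀ x, c < x → 0 < f' x)
    {x : ℝ} (hx : a ≤ x) (hxc : x ≠ c) : f c < f x := by
  have hcont : ContinuousOn f (Ici a) := fun y hy => (hf y hy).continuousAt.continuousWithinAt
  rcases hxc.lt_or_gt with hlt | hgt
  · have hanti : StrictAntiOn f (Icc a c) :=
      strictAntiOn_of_hasDerivWithinAt_neg (convex_Icc a c) (hcont.mono Icc_subset_Ici_self)
        (fun y hy => (hf y (interior_subset hy).1).hasDerivWithinAt)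
        (fun y hy => by rw [interior_Icc] at hy; exact hneg y hy.1 hy.2)
    exact hanti ⟨hx, hlt.le⟩ ⟨hac, le_rfl⟩ hlt
  · have hmono : StrictMonoOn f (Ici c) :=
      strictMonoOn_of_hasDerivWithinAt_pos (convex_Ici c) (hcont.mono (Ici_subset_Ici.2 hac))
        (fun y hy => (hf y (hac.trans (interior_subset hy))).hasDerivWithinAt)
        (fun y hy => by rw [interior_Ici] at hy; exact hpos y hy)
    exact hmono self_mem_Ici hgt.le hgt

namespace HGLasso

noncomputable def reducedObjective (k n γ t u : ℝ) : ℝ :=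
  k / 2 * log u + n * t / (2 * u) + γ / n * u

noncomputable def criticalPoint (k n γ t : ℝ) : ℝ :=
  n * (√(k ^ 2 + 8 * γ * t) - k) / (4 * γ)

variable {k n γ t : ℝ}

theorem hasDerivAt_reducedObjective {u : ℝ} (hn : n ≠ 0) (hu : 0 < u) :
    HasDerivAt (reducedObjective k n γ t)
      ((2 * γ * u ^ 2 + k * n * u - n ^ 2 * t) / (2 * n * u ^ 2)) u := by
  have hlog := (hasDerivAt_log hu.ne').const_mul (k / 2)
  have hinv := (hasDerivAt_inv hu.ne').const_mul (n * t / 2)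
  have hlin := (hasDerivAt_id u).const_mul (γ / n)
  have hF : reducedObjective k n γ t = fun v => k / 2 * log v + n * t / 2 * v⁻¹ + γ / n * id v := by
    funext v
    rw [reducedObjective, id, div_mul_eq_div_div, div_eq_mul_inv _ v]
  rw [hF]
  refine ((hlog.add hinv).add hlin).congr_deriv ?_
  field_simp
  ring

theorem criticalPoint_nonneg (hn : 0 ≤ n) (hγ : 0 < γ) (ht : 0 ≤ t) :
    0 ≤ criticalPoint k n γ t := by
  have hks : k ≤ √(k ^ 2 + 8 * γ * t) :=
    le_sqrt_of_sq_le (by nlinarith [mul_nonneg hγ.le ht])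
  unfold criticalPoint
  have := sub_nonneg.2 hks
  positivity

theorem quadratic_eq_mul_criticalPoint (hγ : 0 < γ) (ht : 0 ≤ t) (u : ℝ) :
    2 * γ * u ^ 2 + k * n * u - n ^ 2 * t =
      (u - criticalPoint k n γ t) * (2 * γ * (u + criticalPoint k n γ t) + k * n) := by
  have hs : √(k ^ 2 + 8 * γ * t) ^ 2 = k ^ 2 + 8 * γ * t :=
    sq_sqrt (by nlinarith [mul_nonneg hγ.le ht])
  unfold criticalPoint
  generalize √(k ^ 2 + 8 * γ * t) = s at hs ⊢
  field_simp
  linear_combination (2 * n ^ 2) * hs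

theorem quadratic_factor_pos (hk : 0 ≤ k) (hn : 0 < n) (hγ : 0 < γ) (ht : 0 ≤ t) {u : ℝ}
    (hu : 0 < u) : 0 < 2 * γ * (u + criticalPoint k n γ t) + k * n := by
  have := criticalPoint_nonneg (k := k) hn.le hγ ht
  positivity

theorem criticalPoint_le_iff (hk : 0 ≤ k) (hn : 0 < n) (hγ : 0 < γ) (ht : 0 ≤ t) {u : ℝ}
    (hu : 0 < u) : criticalPoint k n γ t ≤ u ↔ 0 ≤ 2 * γ * u ^ 2 + k * n * u - n ^ 2 * t := by
  rw [quadratic_eq_mul_criticalPoint hγ ht,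
    mul_nonneg_iff_of_pos_right (quadratic_factor_pos hk hn hγ ht hu), sub_nonneg]

theorem criticalPoint_lt_iff (hk : 0 ≤ k) (hn : 0 < n) (hγ : 0 < γ) (ht : 0 ≤ t) {u : ℝ}
    (hu : 0 < u) : criticalPoint k n γ t < u ↔ 0 < 2 * γ * u ^ 2 + k * n * u - n ^ 2 * t := by
  rw [quadratic_eq_mul_criticalPoint hγ ht,
    mul_pos_iff_of_pos_right (quadratic_factor_pos hk hn hγ ht hu), sub_pos]

theorem reducedObjective_max_lt (hk : 0 ≤ k) (hn : 0 < n) (hγ : 0 < γ) (ht : 0 ≤ t)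
    {σ2 u : ℝ} (hσ2 : 0 < σ2) (hu : σ2 ≤ u) (hne : u ≠ max σ2 (criticalPoint k n γ t)) :
    reducedObjective k n γ t (max σ2 (criticalPoint k n γ t)) < reducedObjective k n γ t u := by
  refine lt_apply_of_hasDerivAt_neg_of_pos (le_max_left _ _)
    (fun x hx => hasDerivAt_reducedObjective hn.ne' (hσ2.trans_le hx)) (fun x hσx hx => ?_)
    (fun x hx => ?_) hu hne
  · have hx0 : 0 < x := hσ2.trans hσx
    have hxc : x < criticalPoint k n γ t := (lt_max_iff.1 hx).resolve_left hσx.not_gt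
    have hq := (criticalPoint_le_iff hk hn hγ ht hx0).not.1 hxc.not_ge
    exact div_neg_of_neg_of_pos (not_le.1 hq) (by positivity)
  · have hx0 : 0 < x := hσ2.trans ((le_max_left _ _).trans_lt hx)
    have hxc : criticalPoint k n γ t < x := (le_max_right _ _).trans_lt hx
    exact div_pos ((criticalPoint_lt_iff hk hn hγ ht hx0).1 hxc) (by positivity)

theorem mul_max_add_eq_max_criticalPoint (hn : 0 < n) (hγ : 0 < γ) (σ2 : ℝ) :
    n * max 0 (1 / (4 * γ) * (√(k ^ 2 + 8 * γ * t) - (k + 4 * σ2 * γ / n))) + σ2 =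
      max σ2 (criticalPoint k n γ t) := by
  rw [mul_max_of_nonneg _ _ hn.le, ← max_add_add_right, criticalPoint]
  congr 1
  · ring
  · field_simp
    ring

end HGLasso

open HGLasso in
/-- The per-block HGLasso hyperparameter objective
`φ(λ) = (k/2)log(nλ+σ²) + nt/(2(nλ+σ²)) + γλ` has the unique global minimizer
`λ̂(γ) = max(0, (1/(4γ))[√(k²+8γt) − (k+4σ²γ/n)])` over `[0,∞)`, and `λ̂(γ) = 0` iff
`t ≤ (σ²/n)(k + 2γσ²/n)`. -/
theorem stmt_13 (k n σ2 γ : ℝ) (hk : 0 < k) (hn : 0 < n) (hσ2 : 0 < σ2) (hγ : 0 < γ)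
    (t : ℝ) (ht : 0 ≤ t) (φ : ℝ → ℝ)
    (hφ : ∀ l, φ l = k / 2 * Real.log (n * l + σ2) + n * t / (2 * (n * l + σ2)) + γ * l)
    (lhat : ℝ)
    (hlhat : lhat = max 0 (1 / (4 * γ) * (Real.sqrt (k ^ 2 + 8 * γ * t) - (k + 4 * σ2 * γ / n)))) :
    (∀ l, 0 ≤ l → φ lhat ≤ φ l) ∧
      (∀ l, 0 ≤ l → φ l = φ lhat → l = lhat) ∧
      (lhat = 0 ↔ t ≤ σ2 / n * (k + 2 * γ * σ2 / n)) := by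
  set u₀ := max σ2 (criticalPoint k n γ t)
  have hu₀ : n * lhat + σ2 = u₀ := hlhat ▸ mul_max_add_eq_max_criticalPoint hn hγ σ2
  have hφF : ∀ l, φ l = reducedObjective k n γ t (n * l + σ2) - γ * σ2 / n := fun l => by
    rw [hφ, reducedObjective]
    field_simp
    ring
  have hmin : ∀ l, 0 ≤ l → n * l + σ2 ≠ u₀ → φ lhat < φ l := fun l hl hne => by
    rw [hφF, hφF, hu₀, sub_lt_sub_iff_right]
    exact reducedObjective_max_lt hk.le hn hγ ht hσ2
      (le_add_of_nonneg_left (mul_nonneg hn.le hl)) hne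
  have hinj : ∀ l, n * l + σ2 = u₀ → l = lhat := fun l hl =>
    mul_left_cancel₀ hn.ne' (by linarith)
  refine ⟨fun l hl => ?_, fun l hl heq => ?_, ?_⟩
  · by_cases h : n * l + σ2 = u₀
    · rw [hinj l h]
    · exact (hmin l hl h).le
  · by_contra hne
    exact (hmin l hl (mt (hinj l) hne)).ne' heq
  · have hbound : σ2 / n * (k + 2 * γ * σ2 / n) = (2 * γ * σ2 ^ 2 + k * n * σ2) / n ^ 2 := by
      field_simp
      ring
    rw [hbound, le_div_iff₀ (by positivity), ← sub_nonneg, mul_comm t,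
      ← criticalPoint_le_iff hk.le hn hγ ht hσ2, ← max_eq_left_iff]
    change lhat = 0 ↔ u₀ = σ2
    rw [← hu₀, add_eq_right, mul_eq_zero, or_iff_right hn.ne']
end

section
/- Let G be an n×m real matrix partitioned into column blocks G = [G^{(1)}, …, G^{(p)}], and suppose c_min I_m ≤ GᵀG/n ≤ c_max I_m with 0 < c_min ≤ c_max < ∞. Let I ⊆ {1,…,p} and let G^{(I)} (resp. G^{(Iᶜ)}) denote the submatrix formed by the column blocks indexed by I (resp. its complement Iᶜ). Then: (i) c_min I ≤ (G^{(I)})ᵀ G^{(I)} / n ≤ c_max I; and (ii) if U₁ and U₂ are matrices with orthonormal columns whose column spans equal the column spans of G^{(I)} and G^{(Iᶜ)} respectively, then the spectral norm satisfies ‖U₁ᵀ U₂‖ ≤ √(1 − c_min/c_max); equivalently, the minimal angle θ_min between the two column spans satisfies cos(θ_min) ≤ √(1 − c_min/c_max). -/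
/-!
Part (i) holds because the Gram matrix of a column submatrix is a principal submatrix of `GᵀG`,
and principal submatrices inherit Loewner bounds.

For (ii), write `A = GᵀG/n` and `κ = c_min/c_max`. Vectors `x = G u ∈ col(G^{(I)})` and
`y = G v ∈ col(G^{(Iᶜ)})` come from coefficient vectors `u ⊥ v` with disjoint supports, so
`|u - t v|² = |u|² + t²|v|²`. The lower bound at `u - t v`, combined with the upper bounds at `u`
and `v`, makes `t ↦ (1 - κ)(x·x) - 2t(x·y) + (1 - κ)t²(y·y)` nonnegative, and its discriminant
gives `|x·y| ≤ (1 - κ)|x||y|`. For orthonormal bases `U₁, U₂` and `z = U₁ᵀU₂ v` one has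
`|z|² = (U₁z)·(U₂v)`, so `‖U₁ᵀU₂‖ ≤ 1 - κ ≤ √(1 - κ)`.
-/

open Matrix

section PrincipalSubmatrix

variable {ι κ R : Type*} [DecidableEq ι] [DecidableEq κ] [CommRing R] [PartialOrder R]
  [StarRing R] {A : Matrix ι ι R} {c : R} {e : κ → ι}

theorem Matrix.PosSemidef.submatrix_sub_smul_one (h : (A - c • 1).PosSemidef)
    (he : Function.Injective e) : (A.submatrix e e - c • 1).PosSemidef := by
  simpa [submatrix_sub, submatrix_smul, submatrix_one _ he] using h.submatrix e

theorem Matrix.PosSemidef.smul_one_sub_submatrix (h : (c • 1 - A).PosSemidef)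
    (he : Function.Injective e) : (c • 1 - A.submatrix e e).PosSemidef := by
  simpa [submatrix_sub, submatrix_smul, submatrix_one _ he] using h.submatrix e

end PrincipalSubmatrix

section Loewner

variable {ι : Type*} [Fintype ι] [DecidableEq ι] {A : Matrix ι ι ℝ}

lemma le_dotProduct_mulVec_of_posSemidef {c : ℝ}
    (h : (A - c • 1).PosSemidef) (w : ι → ℝ) : c * (w ⬝ᵥ w) ≤ w ⬝ᵥ A *ᵥ w := by
  have := h.dotProduct_mulVec_nonneg w
  simp only [star_trivial, sub_mulVec, smul_mulVec, one_mulVec, dotProduct_sub,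
    dotProduct_smul, smul_eq_mul] at this
  linarith

lemma dotProduct_mulVec_le_of_posSemidef {c : ℝ}
    (h : (c • 1 - A).PosSemidef) (w : ι → ℝ) : w ⬝ᵥ A *ᵥ w ≤ c * (w ⬝ᵥ w) := by
  have := h.dotProduct_mulVec_nonneg w
  simp only [star_trivial, sub_mulVec, smul_mulVec, one_mulVec, dotProduct_sub,
    dotProduct_smul, smul_eq_mul] at this
  linarith

lemma sq_dotProduct_mulVec_le_of_loewner {c₁ c₂ : ℝ} (hc₁ : 0 ≤ c₁) (hc₂ : 0 < c₂)
    (hlow : (A - c₁ • 1).PosSemidef) (hup : (c₂ • 1 - A).PosSemidef)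
    {u v : ι → ℝ} (huv : u ⬝ᵥ v = 0) :
    (u ⬝ᵥ A *ᵥ v) ^ 2 ≤ (1 - c₁ / c₂) ^ 2 * (u ⬝ᵥ A *ᵥ u) * (v ⬝ᵥ A *ᵥ v) := by
  set κ := c₁ / c₂
  have hA : Aᵀ = A := by
    have h := hup.isHermitian
    rwa [IsHermitian, conjTranspose_sub, conjTranspose_smul, conjTranspose_one, star_trivial,
      sub_right_inj, conjTranspose_eq_transpose_of_trivial] at h
  have hsymm : v ⬝ᵥ A *ᵥ u = u ⬝ᵥ A *ᵥ v := by
    rw [dotProduct_mulVec, ← mulVec_transpose, hA, dotProduct_comm]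
  have hκ (w : ι → ℝ) : κ * (w ⬝ᵥ A *ᵥ w) ≤ c₁ * (w ⬝ᵥ w) :=
    calc κ * (w ⬝ᵥ A *ᵥ w) ≤ κ * (c₂ * (w ⬝ᵥ w)) :=
          mul_le_mul_of_nonneg_left (dotProduct_mulVec_le_of_posSemidef hup w)
            (div_nonneg hc₁ hc₂.le)
      _ = c₁ * (w ⬝ᵥ w) := by rw [← mul_assoc, div_mul_cancel₀ _ hc₂.ne']
  have hquad (t : ℝ) : 0 ≤ ((1 - κ) * (v ⬝ᵥ A *ᵥ v)) * (t * t) + (-2 * (u ⬝ᵥ A *ᵥ v)) * t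
      + (1 - κ) * (u ⬝ᵥ A *ᵥ u) := by
    have h := le_dotProduct_mulVec_of_posSemidef hlow (u - t • v)
    have hv := hκ (t • v)
    simp only [mulVec_sub, mulVec_smul, sub_dotProduct, dotProduct_sub, smul_dotProduct,
      dotProduct_smul, smul_eq_mul, hsymm, huv, dotProduct_comm v u] at h hv
    nlinarith [hκ u]
  have := discrim_le_zero hquad
  rw [discrim] at this
  nlinarith

end Loewner

section Gram

variable {m ι R : Type*} [Fintype m] [CommSemiring R]

lemma dotProduct_transpose_mul_self_mulVec [Fintype ι] (G : Matrix m ι R) (u v : ι → R) :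
    u ⬝ᵥ (Gᵀ * G) *ᵥ v = (G *ᵥ u) ⬝ᵥ (G *ᵥ v) := by
  rw [← mulVec_mulVec, dotProduct_mulVec, vecMul_transpose]

lemma transpose_mul_self_submatrix {κ : Type*} (G : Matrix m ι R) (e : κ → ι) :
    (G.submatrix id e)ᵀ * G.submatrix id e = (Gᵀ * G).submatrix e e := by
  rw [submatrix_mul _ _ _ _ _ Function.bijective_id, transpose_submatrix]

end Gram

section ExtendByZero

variable {m ι R : Type*} [CommSemiring R] {P : ι → Prop}

lemma extend_val_apply_of_not (a : {i // P i} → R) {i : ι} (hi : ¬P i) :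
    Function.extend Subtype.val a 0 i = 0 :=
  Function.extend_apply' _ _ _ fun ⟨j, hj⟩ => hi (hj ▸ j.2)

variable [Fintype ι] [DecidablePred P]

lemma submatrix_val_mulVec (G : Matrix m ι R) (a : {i // P i} → R) :
    G.submatrix id Subtype.val *ᵥ a = G *ᵥ Function.extend Subtype.val a 0 := by
  ext j
  change ∑ i, G j i.1 * a i = ∑ i, G j i * Function.extend Subtype.val a 0 i
  rw [← Fintype.sum_subtype_add_sum_subtype P]
  simp [fun i : {i // ¬P i} => extend_val_apply_of_not a i.2]

lemma extend_val_dotProduct_extend_val (a : {i // P i} → R) (b : {i // ¬P i} → R) :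
    Function.extend Subtype.val a 0 ⬝ᵥ Function.extend Subtype.val b 0 = 0 := by
  refine Finset.sum_eq_zero fun i _ => ?_
  by_cases hi : P i
  · rw [extend_val_apply_of_not b (not_not_intro hi), mul_zero]
  · rw [extend_val_apply_of_not a hi, zero_mul]

end ExtendByZero

lemma mem_span_range_col_iff {m ι R : Type*} [Fintype ι] [CommSemiring R] (M : Matrix m ι R)
    (x : m → R) : x ∈ Submodule.span R (Set.range M.col) ↔ ∃ a, M *ᵥ a = x := by
  rw [← range_mulVecLin]
  rfl

section SpanBound

variable {m ι : Type*} [Fintype m] [Fintype ι] [DecidableEq ι] {P : ι → Prop} [DecidablePred P]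

lemma sq_dotProduct_le_of_mem_span_submatrix_val (G : Matrix m ι ℝ) {s c₁ c₂ : ℝ} (hs : 0 < s)
    (hc₁ : 0 ≤ c₁) (hc₂ : 0 < c₂) (hlow : (s • (Gᵀ * G) - c₁ • 1).PosSemidef)
    (hup : (c₂ • 1 - s • (Gᵀ * G)).PosSemidef) {x y : m → ℝ}
    (hx : x ∈ Submodule.span ℝ (Set.range (G.submatrix id (Subtype.val : {i // P i} → ι)).col))
    (hy : y ∈ Submodule.span ℝ (Set.range (G.submatrix id (Subtype.val : {i // ¬P i} → ι)).col)) :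
    (x ⬝ᵥ y) ^ 2 ≤ (1 - c₁ / c₂) ^ 2 * (x ⬝ᵥ x) * (y ⬝ᵥ y) := by
  obtain ⟨a, rfl⟩ := (mem_span_range_col_iff _ _).1 hx
  obtain ⟨b, rfl⟩ := (mem_span_range_col_iff _ _).1 hy
  have h := sq_dotProduct_mulVec_le_of_loewner hc₁ hc₂ hlow hup
    (extend_val_dotProduct_extend_val a b)
  simp only [smul_mulVec, dotProduct_smul, dotProduct_transpose_mul_self_mulVec,
    smul_eq_mul] at h
  rw [← submatrix_val_mulVec, ← submatrix_val_mulVec] at h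
  have hs2 : 0 < s ^ 2 := by positivity
  nlinarith

end SpanBound

lemma EuclideanSpace.real_norm_sq_eq_dotProduct {ι : Type*} [Fintype ι]
    (x : EuclideanSpace ℝ ι) : ‖x‖ ^ 2 = x.ofLp ⬝ᵥ x.ofLp := by
  rw [← real_inner_self_eq_norm_sq, EuclideanSpace.inner_eq_star_dotProduct, star_trivial]

lemma norm_toEuclideanLin_transpose_mul_le {m r₁ r₂ : Type*} [Fintype m] [Fintype r₁]
    [Fintype r₂] [DecidableEq r₁] [DecidableEq r₂] {U₁ : Matrix m r₁ ℝ} {U₂ : Matrix m r₂ ℝ}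
    (hU₁ : U₁ᵀ * U₁ = 1) (hU₂ : U₂ᵀ * U₂ = 1) {ρ : ℝ} (hρ : 0 ≤ ρ)
    (h : ∀ x ∈ Submodule.span ℝ (Set.range U₁.col), ∀ y ∈ Submodule.span ℝ (Set.range U₂.col),
      (x ⬝ᵥ y) ^ 2 ≤ ρ ^ 2 * (x ⬝ᵥ x) * (y ⬝ᵥ y)) :
    ‖LinearMap.toContinuousLinearMap (toEuclideanLin (U₁ᵀ * U₂))‖ ≤ ρ := by
  refine ContinuousLinearMap.opNorm_le_bound _ hρ fun v => ?_
  set z := (U₁ᵀ * U₂) *ᵥ v.ofLp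
  have hz : z ⬝ᵥ z = (U₁ *ᵥ z) ⬝ᵥ (U₂ *ᵥ v.ofLp) := by
    rw [← vecMul_transpose, ← dotProduct_mulVec, mulVec_mulVec]
  have hU₁z : (U₁ *ᵥ z) ⬝ᵥ (U₁ *ᵥ z) = z ⬝ᵥ z := by
    rw [← dotProduct_transpose_mul_self_mulVec, hU₁, one_mulVec]
  have hU₂v : (U₂ *ᵥ v.ofLp) ⬝ᵥ (U₂ *ᵥ v.ofLp) = v.ofLp ⬝ᵥ v.ofLp := by
    rw [← dotProduct_transpose_mul_self_mulVec, hU₂, one_mulVec]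
  have hcos := h _ ((mem_span_range_col_iff _ _).2 ⟨z, rfl⟩) _
    ((mem_span_range_col_iff _ _).2 ⟨v.ofLp, rfl⟩)
  rw [← hz, hU₁z, hU₂v] at hcos
  have hz0 : 0 ≤ z ⬝ᵥ z := by simpa using dotProduct_star_self_nonneg z
  have hv0 : 0 ≤ v.ofLp ⬝ᵥ v.ofLp := by simpa using dotProduct_star_self_nonneg v.ofLp
  rw [← pow_le_pow_iff_left₀ (norm_nonneg _) (by positivity) two_ne_zero, mul_pow,
    EuclideanSpace.real_norm_sq_eq_dotProduct, EuclideanSpace.real_norm_sq_eq_dotProduct]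
  change z ⬝ᵥ z ≤ _
  nlinarith [mul_nonneg (sq_nonneg ρ) hv0]

/-- If `c_min I ≤ GᵀG/n ≤ c_max I`, then (i) the same Loewner bounds hold for every column
block submatrix `G^{(I)}`, and (ii) the minimal angle between the column spans of `G^{(I)}`
and `G^{(Iᶜ)}` satisfies `cos(θ_min) = ‖U₁ᵀU₂‖ ≤ √(1 − c_min/c_max)`. -/
theorem stmt_17 (n p : ℕ) (k : Fin p → ℕ)
    (G : Matrix (Fin n) ((i : Fin p) × Fin (k i)) ℝ)
    (cmin cmax : ℝ) (h0 : 0 < cmin) (hcc : cmin ≤ cmax)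
    (hlow : (((n : ℝ))⁻¹ • (Gᵀ * G) -
      cmin • (1 : Matrix ((i : Fin p) × Fin (k i)) ((i : Fin p) × Fin (k i)) ℝ)).PosSemidef)
    (hup : (cmax • (1 : Matrix ((i : Fin p) × Fin (k i)) ((i : Fin p) × Fin (k i)) ℝ) -
      ((n : ℝ))⁻¹ • (Gᵀ * G)).PosSemidef)
    (I : Finset (Fin p))
    (GI : Matrix (Fin n) {x : (i : Fin p) × Fin (k i) // x.1 ∈ I} ℝ)
    (hGI : GI = G.submatrix id Subtype.val)
    (GIc : Matrix (Fin n) {x : (i : Fin p) × Fin (k i) // x.1 ∉ I} ℝ)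
    (hGIc : GIc = G.submatrix id Subtype.val) :
    ((((n : ℝ))⁻¹ • (GIᵀ * GI) - cmin • (1 : Matrix {x : (i : Fin p) × Fin (k i) // x.1 ∈ I}
        {x : (i : Fin p) × Fin (k i) // x.1 ∈ I} ℝ)).PosSemidef ∧
      (cmax • (1 : Matrix {x : (i : Fin p) × Fin (k i) // x.1 ∈ I}
        {x : (i : Fin p) × Fin (k i) // x.1 ∈ I} ℝ) - ((n : ℝ))⁻¹ • (GIᵀ * GI)).PosSemidef) ∧
      (∀ (r₁ r₂ : ℕ) (U₁ : Matrix (Fin n) (Fin r₁) ℝ) (U₂ : Matrix (Fin n) (Fin r₂) ℝ),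
        U₁ᵀ * U₁ = 1 → U₂ᵀ * U₂ = 1 →
        Submodule.span ℝ (Set.range fun j => U₁ᵀ j) =
          Submodule.span ℝ (Set.range fun x => GIᵀ x) →
        Submodule.span ℝ (Set.range fun j => U₂ᵀ j) =
          Submodule.span ℝ (Set.range fun x => GIcᵀ x) →
        ‖LinearMap.toContinuousLinearMap (Matrix.toEuclideanLin (U₁ᵀ * U₂))‖ ≤
          Real.sqrt (1 - cmin / cmax)) := by
  have hcmax : 0 < cmax := h0.trans_le hcc
  have hκ : 0 ≤ 1 - cmin / cmax := sub_nonneg.2 ((div_le_one hcmax).2 hcc)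
  have hGram :
      (n : ℝ)⁻¹ • (GIᵀ * GI) = ((n : ℝ)⁻¹ • (Gᵀ * G)).submatrix Subtype.val Subtype.val := by
    rw [hGI, transpose_mul_self_submatrix]
    rfl
  refine ⟨?_, fun r₁ r₂ U₁ U₂ hU₁ hU₂ hspan₁ hspan₂ => ?_⟩
  · rw [hGram]
    exact ⟨hlow.submatrix_sub_smul_one Subtype.val_injective,
      hup.smul_one_sub_submatrix Subtype.val_injective⟩
  refine (norm_toEuclideanLin_transpose_mul_le hU₁ hU₂ hκ fun x hx y hy => ?_).trans
    (Real.le_sqrt_of_sq_le (by nlinarith [div_nonneg h0.le hcmax.le]))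
  rcases n.eq_zero_or_pos with rfl | hn
  · simp [Subsingleton.elim x 0]
  rw [col, hspan₁, hGI] at hx
  rw [col, hspan₂, hGIc] at hy
  exact sq_dotProduct_le_of_mem_span_submatrix_val G (by positivity) h0.le hcmax hlow hup hx hy
end

section
/- Let G be an n×m real matrix with GᵀG ≤ n c_max I_m (in the positive semidefinite order) for some c_max > 0, let σ² > 0, and let Λ = diag(λ₁, …, λ_m) with 0 ≤ λᵢ ≤ L for all i. Then log det( Iₙ + σ⁻² G Λ Gᵀ ) ≤ m · log( 1 + n σ⁻² c_max L ). -/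
/-!
With `D = diagonal (√λ)` we have `GΛGᵀ = (GD)(GD)ᵀ`, and the Weinstein–Aronszajn identity
`det (1 + AB) = det (1 + BA)` turns the `n × n` determinant into one of size `m`, namely
`det (1 + σ⁻² (GD)ᵀ(GD))`. Conjugating `GᵀG ≤ n c_max` by `D` gives
`(GD)ᵀ(GD) ≤ n c_max Λ ≤ n c_max L` in the Loewner order, so each of the `m` eigenvalues of the
positive definite matrix `1 + σ⁻² (GD)ᵀ(GD)` lies in `(0, 1 + n σ⁻² c_max L]`.
-/

open Matrix
open scoped MatrixOrder

namespace Matrix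

variable {m n : Type*}

theorem IsHermitian.eigenvalues_le_of_le_smul_one [Fintype m] [DecidableEq m]
    {A : Matrix m m ℝ} (hA : A.IsHermitian) {c : ℝ} (h : A ≤ c • 1) (i : m) :
    hA.eigenvalues i ≤ c := by
  rw [← Algebra.algebraMap_eq_smul_one, le_algebraMap_iff_spectrum_le hA.isSelfAdjoint] at h
  exact h _ (hA.eigenvalues_mem_spectrum_real i)

theorem PosSemidef.det_le_pow_of_le_smul_one [Fintype m] [DecidableEq m] {A : Matrix m m ℝ}
    (hA : A.PosSemidef) {c : ℝ} (h : A ≤ c • 1) : A.det ≤ c ^ Fintype.card m := by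
  rw [hA.isHermitian.det_eq_prod_eigenvalues, ← Finset.card_univ, ← Finset.prod_const]
  exact Finset.prod_le_prod (fun i _ => hA.eigenvalues_nonneg i)
    (fun i _ => hA.isHermitian.eigenvalues_le_of_le_smul_one h i)

theorem PosDef.log_det_le_of_le_smul_one [Fintype m] [DecidableEq m] {A : Matrix m m ℝ}
    (hA : A.PosDef) {c : ℝ} (h : A ≤ c • 1) : Real.log A.det ≤ Fintype.card m * Real.log c := by
  rw [← Real.log_pow]
  exact Real.log_le_log hA.det_pos (hA.posSemidef.det_le_pow_of_le_smul_one h)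

theorem det_one_add_smul_mul_comm [Fintype m] [Fintype n] [DecidableEq m] [DecidableEq n]
    {R : Type*} [CommRing R] (s : R) (A : Matrix n m R) (B : Matrix m n R) :
    (1 + s • (A * B)).det = (1 + s • (B * A)).det := by
  rw [← Matrix.mul_smul, det_one_add_mul_comm, Matrix.smul_mul]

theorem mul_diagonal_mul_transpose_eq [Fintype m] [DecidableEq m] {d : m → ℝ}
    (hd : ∀ i, 0 ≤ d i) (G : Matrix n m ℝ) :
    G * diagonal d * Gᵀ = G * diagonal (fun i => √(d i)) * (G * diagonal (fun i => √(d i)))ᵀ := by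
  rw [transpose_mul, diagonal_transpose, ← Matrix.mul_assoc,
    Matrix.mul_assoc G (diagonal _) (diagonal _), diagonal_mul_diagonal]
  simp only [Real.mul_self_sqrt (hd _)]

theorem diagonal_le_smul_one [DecidableEq m] {d : m → ℝ} {L : ℝ} (hd : ∀ i, d i ≤ L) :
    diagonal d ≤ L • 1 := by
  rw [le_iff, smul_one_eq_diagonal, diagonal_sub, posSemidef_diagonal_iff]
  exact fun i => sub_nonneg.mpr (hd i)

theorem transpose_mul_self_mul_diagonal_sqrt_le [Fintype m] [Fintype n] [DecidableEq m]
    {G : Matrix n m ℝ} {c : ℝ} (hc : 0 ≤ c) (hG : Gᵀ * G ≤ c • 1) {d : m → ℝ} {L : ℝ}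
    (hd : ∀ i, 0 ≤ d i ∧ d i ≤ L) :
    (G * diagonal (fun i => √(d i)))ᵀ * (G * diagonal (fun i => √(d i))) ≤ (c * L) • 1 := by
  set D := diagonal (fun i => √(d i))
  calc (G * D)ᵀ * (G * D) = star D * (Gᵀ * G) * D := by
        rw [star_eq_conjTranspose, conjTranspose_eq_transpose_of_trivial, transpose_mul,
          Matrix.mul_assoc, Matrix.mul_assoc, Matrix.mul_assoc]
    _ ≤ star D * (c • 1) * D := star_left_conjugate_le_conjugate hG D
    _ = c • diagonal d := by
        rw [star_eq_conjTranspose, conjTranspose_eq_transpose_of_trivial, diagonal_transpose,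
          Matrix.mul_smul, Matrix.mul_one, Matrix.smul_mul, diagonal_mul_diagonal]
        simp only [Real.mul_self_sqrt (hd _).1]
    _ ≤ c • (L • 1) := smul_le_smul_of_nonneg_left (diagonal_le_smul_one fun i => (hd i).2) hc
    _ = (c * L) • 1 := smul_smul ..

end Matrix

/-- If `GᵀG ≤ n c_max I` and `0 ≤ λᵢ ≤ L`, then
`log det(I + σ⁻²GΛGᵀ) ≤ m log(1 + nσ⁻²c_max L)`. -/
theorem stmt_19 (n m : ℕ) (G : Matrix (Fin n) (Fin m) ℝ) (cmax : ℝ) (hc : 0 < cmax)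
    (hG : (((n : ℝ) * cmax) • (1 : Matrix (Fin m) (Fin m) ℝ) - Gᵀ * G).PosSemidef)
    (σ2 : ℝ) (hσ2 : 0 < σ2) (lam : Fin m → ℝ) (L : ℝ)
    (hlam : ∀ i, 0 ≤ lam i ∧ lam i ≤ L) :
    Real.log ((1 + σ2⁻¹ • (G * Matrix.diagonal lam * Gᵀ)).det) ≤
      m * Real.log (1 + n * σ2⁻¹ * cmax * L) := by
  set B := G * diagonal (fun i => √(lam i))
  have hBB : Bᵀ * B ≤ (n * cmax * L) • 1 :=
    transpose_mul_self_mul_diagonal_sqrt_le (by positivity) hG hlam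
  have hσ : 0 ≤ σ2⁻¹ := inv_nonneg.mpr hσ2.le
  have hpos : (1 + σ2⁻¹ • (Bᵀ * B)).PosDef := by
    rw [← conjTranspose_eq_transpose_of_trivial]
    exact PosDef.one.add_posSemidef ((posSemidef_conjTranspose_mul_self B).smul hσ)
  have hle : 1 + σ2⁻¹ • (Bᵀ * B) ≤ (1 + n * σ2⁻¹ * cmax * L) • 1 :=
    calc 1 + σ2⁻¹ • (Bᵀ * B) ≤ 1 + σ2⁻¹ • ((n * cmax * L) • 1) := by gcongr
      _ = (1 + n * σ2⁻¹ * cmax * L) • 1 := by rw [smul_smul, add_smul, one_smul]; congr 2; ring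
  rw [mul_diagonal_mul_transpose_eq (fun i => (hlam i).1), det_one_add_smul_mul_comm]
  simpa only [Fintype.card_fin] using hpos.log_det_le_of_le_smul_one hle
end
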